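/- Define w_n := 2^n for integers n ≤ 0 and w_n := 1/(n+1) for integers n > 0, and let W be the bounded operator on ℓ²(ℤ,ℂ) with (Wf)(n) = (w_n/w_{n−1})·f(n−1); since 1/2 ≤ w_{n+1}/w_n ≤ 2 for all n, W is bounded and invertible with bounded inverse. Then: (1) ‖W^N‖ = 2^N and ‖((W*)⁻¹)^N‖ = N+1 for every integer N ≥ 1; (2) the spectral radius of W equals 2, the spectral radius of W* equals 2, and the spectral radii of W⁻¹ and (W*)⁻¹ both equal 1; consequently the spectrum of W is contained in { z ∈ ℂ : 1 ≤ |z| ≤ 2 } and the spectrum of (W*)⁻¹ is contained in { z ∈ ℂ : 1/2 ≤ |z| ≤ 1 }; (3) the set S₀(W) = { f : ‖W^N f‖ → 0 } is dense in ℓ²(ℤ,ℂ), while S((W*)⁻¹) = { f : sup_N ‖((W*)⁻¹)^N f‖ < ∞ } = {0}. -/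

import Mathlib

noncomputable section
open Real ContinuousLinearMap Filter
open scoped ENNReal

/-- The Hilbert space `ℓ²(ℤ, ℂ)` of square-summable two-sided complex sequences. -/
abbrev l2 : Type := lp (fun _ : ℤ => ℂ) 2

/-- The set `S₀(T)` of vectors whose orbit under `T` tends to `0` in norm. -/
def S0 (T : l2 →L[ℂ] l2) : Set l2 :=
  {f | Tendsto (fun N : ℕ => ‖(T ^ N) f‖) atTop (nhds 0)}

/-- The set `S(T)` of vectors with bounded orbit under `T`. -/
def Sbd (T : l2 →L[ℂ] l2) : Set l2 :=
  {f | ∃ C : ℝ, 0 ≤ C ∧ ∀ N : ℕ, ‖(T ^ N) f‖ ≤ C}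

/-!
The powers `W ^ N` and `W⁻¹ ^ N` are again weighted shifts, with coefficients `w n / w (n - N)`
and `w n / w (n + N)`, so their norms are the suprema of these ratios. The weights lose at most a
factor `2` per step and satisfy `w m ≤ (k + 1) w (m + k)`, and both bounds are attained at `n = 0`;
Gelfand's formula then gives the spectral radii, and the spectrum of an invertible operator lies in
the annulus bounded by the spectral radii of the operator and of its inverse. Since `w n → 0` as
`n → ∞`, every basis vector has `W`-orbit tending to `0`, whereas `(W*)⁻¹` is the weighted shift
with weights `1 / w`, which blows up every nonzero coordinate.
-/

open scoped NNReal InnerProductSpace Topology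

def weight (n : ℤ) : ℝ := if n ≤ 0 then 2 ^ n else ((n : ℝ) + 1)⁻¹

lemma weight_of_nonpos {n : ℤ} (hn : n ≤ 0) : weight n = 2 ^ n := if_pos hn

lemma weight_of_pos {n : ℤ} (hn : 0 < n) : weight n = ((n : ℝ) + 1)⁻¹ := if_neg hn.not_ge

lemma eq_weight {w : ℤ → ℝ}
    (hw : ∀ n : ℤ, (n ≤ 0 → w n = (2 : ℝ) ^ n) ∧ (0 < n → w n = ((n : ℝ) + 1)⁻¹)) :
    w = weight := by
  funext n
  rcases le_or_gt n 0 with hn | hn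
  · rw [(hw n).1 hn, weight_of_nonpos hn]
  · rw [(hw n).2 hn, weight_of_pos hn]

lemma weight_pos (n : ℤ) : 0 < weight n := by
  unfold weight; split_ifs with hn
  · positivity
  · have : (0 : ℝ) < n := by exact_mod_cast not_le.1 hn
    positivity

lemma weight_ne_zero (n : ℤ) : weight n ≠ 0 := (weight_pos n).ne'

lemma weight_le_two_mul_weight_sub_one (n : ℤ) : weight n ≤ 2 * weight (n - 1) := by
  rcases le_or_gt n 0 with hn | hn
  · rw [weight_of_nonpos hn, weight_of_nonpos (by omega), ← zpow_one_add₀ two_ne_zero,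
      add_sub_cancel]
  obtain rfl | hn1 := eq_or_lt_of_le (show (1 : ℤ) ≤ n from hn)
  · rw [weight_of_pos hn, sub_self, weight_of_nonpos le_rfl]; norm_num
  · have h1 : (1 : ℝ) < n := by exact_mod_cast hn1
    rw [weight_of_pos hn, weight_of_pos (by omega), Int.cast_sub, Int.cast_one, sub_add_cancel]
    rw [inv_le_iff_one_le_mul₀ (by positivity), mul_comm, ← mul_assoc, ← div_eq_mul_inv,
      le_div_iff₀ (by positivity)]
    linarith

lemma weight_le_two_pow_mul (N : ℕ) (n : ℤ) : weight n ≤ 2 ^ N * weight (n - N) := by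
  induction N generalizing n with
  | zero => simp
  | succ N ih =>
    calc weight n ≤ 2 ^ N * weight (n - N) := ih n
      _ ≤ 2 ^ N * (2 * weight (n - N - 1)) := by
        gcongr; exact weight_le_two_mul_weight_sub_one _
      _ = 2 ^ (N + 1) * weight (n - (N + 1 : ℕ)) := by push_cast; ring_nf

lemma weight_le_succ_mul (m : ℤ) (k : ℕ) : weight m ≤ (k + 1) * weight (m + k) := by
  have hk : (0 : ℝ) ≤ k := k.cast_nonneg
  rcases le_or_gt (m + k) 0 with hmk | hmk
  · rw [weight_of_nonpos (by omega), weight_of_nonpos hmk]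
    have : (2 : ℝ) ^ m ≤ 2 ^ (m + k) := zpow_le_zpow_right₀ one_le_two (by omega)
    nlinarith [zpow_pos (show (0 : ℝ) < 2 by norm_num) (m + k)]
  have hmk' : (1 : ℝ) ≤ m + k := by exact_mod_cast hmk
  rw [weight_of_pos hmk, Int.cast_add, Int.cast_natCast, ← div_eq_mul_inv,
    le_div_iff₀ (by linarith)]
  rcases le_or_gt m 0 with hm | hm
  · have h2 : (2 : ℝ) ^ m ≤ 1 := zpow_le_one_of_nonpos₀ one_le_two hm
    have hm' : (m : ℝ) ≤ 0 := by exact_mod_cast hm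
    rw [weight_of_nonpos hm]
    nlinarith [zpow_pos (show (0 : ℝ) < 2 by norm_num) m]
  · have hm' : (1 : ℝ) ≤ m := by exact_mod_cast hm
    rw [weight_of_pos hm, inv_mul_le_iff₀ (by linarith)]
    nlinarith

lemma tendsto_weight_add_atTop (m : ℤ) :
    Tendsto (fun N : ℕ => weight (m + N)) atTop (𝓝 0) := by
  have hlin : Tendsto (fun N : ℕ => ((m + N : ℤ) : ℝ) + 1) atTop atTop := by
    refine tendsto_atTop_add_const_right _ _ ?_
    push_cast
    exact tendsto_atTop_add_const_left _ _ tendsto_natCast_atTop_atTop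
  refine hlin.inv_tendsto_atTop.congr' ?_
  filter_upwards [eventually_gt_atTop (-m).toNat] with N hN
  rw [weight_of_pos (by omega)]
  rfl

lemma weight_zero : weight 0 = 1 := by simp [weight_of_nonpos le_rfl]

lemma weight_neg_natCast (N : ℕ) : weight (-N) = (2 ^ N)⁻¹ := by
  rw [weight_of_nonpos (by omega), zpow_neg, zpow_natCast]

lemma weight_natCast (N : ℕ) : weight N = ((N : ℝ) + 1)⁻¹ := by
  rcases N.eq_zero_or_pos with rfl | hN
  · simp [weight_zero]
  · rw [weight_of_pos (by omega), Int.cast_natCast]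

lemma tendsto_abs_inv_weight_add_atTop (m : ℤ) :
    Tendsto (fun N : ℕ => |(weight (m + N))⁻¹|) atTop atTop := by
  have hpos : Tendsto (fun N : ℕ => weight (m + N)) atTop (𝓝[>] 0) :=
    tendsto_nhdsWithin_iff.2 ⟨tendsto_weight_add_atTop m, .of_forall fun N => weight_pos _⟩
  refine hpos.inv_tendsto_nhdsGT_zero.congr fun N => ?_
  rw [abs_of_pos (inv_pos.2 (weight_pos _))]
  rfl

lemma lp.norm_le_mul_norm_of_le_comp_equiv {α E : Type*} [NormedAddCommGroup E] {p : ℝ≥0∞}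
    (hp : 0 < p.toReal) {M : ℝ} (hM : 0 ≤ M) (σ : α ≃ α) {f g : lp (fun _ : α => E) p}
    (h : ∀ n, ‖g n‖ ≤ M * ‖f (σ n)‖) : ‖g‖ ≤ M * ‖f‖ := by
  refine lp.norm_le_of_tsum_le hp (mul_nonneg hM (lp.norm_nonneg' f)) ?_
  rw [Real.mul_rpow hM (lp.norm_nonneg' f), lp.norm_rpow_eq_tsum hp,
    ← σ.tsum_eq (fun i => ‖f i‖ ^ p.toReal), ← tsum_mul_left]
  refine Summable.tsum_le_tsum (fun n => ?_) ((lp.memℓp g).summable hp)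
    ((σ.summable_iff.2 ((lp.memℓp f).summable hp)).mul_left _)
  rw [← Real.mul_rpow hM (norm_nonneg _)]
  exact Real.rpow_le_rpow (norm_nonneg _) (h n) hp.le

lemma add_mem_S0 {T : l2 →L[ℂ] l2} {f g : l2} (hf : f ∈ S0 T) (hg : g ∈ S0 T) :
    f + g ∈ S0 T := by
  have hsum := hf.add hg
  rw [zero_add] at hsum
  refine squeeze_zero (fun _ => norm_nonneg _) (fun N => ?_) hsum
  rw [map_add]
  exact norm_add_le _ _

lemma dense_S0_of_single_mem {T : l2 →L[ℂ] l2} (h : ∀ m x, lp.single 2 m x ∈ S0 T) :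
    Dense (S0 T) := by
  intro f
  refine mem_closure_of_tendsto (lp.hasSum_single (by norm_num) f) (.of_forall fun s => ?_)
  refine Finset.sum_induction _ (· ∈ S0 T) (fun _ _ => add_mem_S0) ?_ fun m _ => h m (f m)
  simp [S0]

/-- The paper's `W` is `IsWeightedShift W w 1`. Writing the coefficients as ratios of one weight
makes the class closed under products, inverses and, with the weight `1 / w`, adjoints. -/
def IsWeightedShift (T : l2 →L[ℂ] l2) (w : ℤ → ℝ) (k : ℤ) : Prop :=
  ∀ f n, T f n = ((w n / w (n - k) : ℝ) : ℂ) * f (n - k)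

namespace IsWeightedShift

variable {S T : l2 →L[ℂ] l2} {w : ℤ → ℝ} {k l : ℤ}

lemma mul (hS : IsWeightedShift S w k) (hT : IsWeightedShift T w l) (hw : ∀ n, w n ≠ 0) :
    IsWeightedShift (S * T) w (k + l) := by
  intro f n
  rw [mul_apply_eq_comp, hS, hT, ← mul_assoc, ← Complex.ofReal_mul, div_mul_div_cancel₀ (hw _),
    sub_sub]

lemma pow (hT : IsWeightedShift T w k) (hw : ∀ n, w n ≠ 0) (N : ℕ) :
    IsWeightedShift (T ^ N) w (N * k) := by
  induction N with
  | zero => intro f n; simp [div_self (hw n)]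
  | succ N ih => simpa [pow_succ, add_mul] using ih.mul hT hw

lemma inv {U : (l2 →L[ℂ] l2)ˣ} (hU : IsWeightedShift U w k) (hw : ∀ n, w n ≠ 0) :
    IsWeightedShift ((U⁻¹ : (l2 →L[ℂ] l2)ˣ) : l2 →L[ℂ] l2) w (-k) := by
  intro f n
  have h := hU (((U⁻¹ : (l2 →L[ℂ] l2)ˣ) : l2 →L[ℂ] l2) f) (n + k)
  rw [← mul_apply_eq_comp, Units.mul_inv, one_apply_eq_self, add_sub_cancel_right] at h
  rw [sub_neg_eq_add, h, ← mul_assoc, ← Complex.ofReal_mul, div_mul_div_cancel₀ (hw _),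
    div_self (hw _), Complex.ofReal_one, one_mul]

lemma apply_single (hT : IsWeightedShift T w k) (m : ℤ) (x : ℂ) :
    T (lp.single 2 m x) = ((w (m + k) / w m : ℝ) : ℂ) • lp.single 2 (m + k) x := by
  ext n
  rw [hT, lp.coeFn_smul, Pi.smul_apply, smul_eq_mul]
  rcases eq_or_ne n (m + k) with rfl | hn
  · rw [add_sub_cancel_right, lp.single_apply_self, lp.single_apply_self]
  · rw [lp.single_apply_ne _ _ _ (by omega), lp.single_apply_ne _ _ _ hn, mul_zero, mul_zero]

lemma norm_apply_single (hT : IsWeightedShift T w k) (m : ℤ) (x : ℂ) :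
    ‖T (lp.single 2 m x)‖ = |w (m + k) / w m| * ‖x‖ := by
  rw [hT.apply_single, norm_smul, Complex.norm_real, Real.norm_eq_abs,
    lp.norm_single (by norm_num)]

lemma opNorm_le (hT : IsWeightedShift T w k) {M : ℝ} (hM : ∀ n, |w n / w (n - k)| ≤ M) :
    ‖T‖ ≤ M := by
  have hM0 : 0 ≤ M := (abs_nonneg _).trans (hM 0)
  refine T.opNorm_le_bound hM0 fun f => ?_
  refine lp.norm_le_mul_norm_of_le_comp_equiv (by norm_num) hM0 (Equiv.subRight k) fun n => ?_
  rw [hT, norm_mul, Complex.norm_real, Real.norm_eq_abs]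
  exact mul_le_mul_of_nonneg_right (hM n) (norm_nonneg _)

lemma abs_le_opNorm (hT : IsWeightedShift T w k) (m : ℤ) : |w (m + k) / w m| ≤ ‖T‖ := by
  simpa [hT.norm_apply_single] using T.le_opNorm (lp.single 2 m 1)

lemma adjoint (hT : IsWeightedShift T w k) :
    IsWeightedShift (ContinuousLinearMap.adjoint T) (fun n => (w n)⁻¹) (-k) := by
  intro f n
  have coord (i : ℤ) (g : l2) : ⟪lp.single 2 i (1 : ℂ), g⟫_ℂ = g i := by
    simp [lp.inner_single_left]
  rw [← coord, adjoint_inner_right, hT.apply_single, inner_smul_left, coord,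
    Complex.conj_ofReal, inv_div_inv, sub_neg_eq_add]

lemma dense_S0 (hT : IsWeightedShift T w 1) (hw : ∀ n, w n ≠ 0)
    (hlim : ∀ m, Tendsto (fun N : ℕ => w (m + N)) atTop (𝓝 0)) : Dense (S0 T) := by
  refine dense_S0_of_single_mem fun m x => ?_
  have hnorm (N : ℕ) : ‖(T ^ N) (lp.single 2 m x)‖ = |w (m + N) / w m| * ‖x‖ := by
    simpa using (hT.pow hw N).norm_apply_single m x
  have hlim' := ((hlim m).div_const (w m)).abs.mul_const ‖x‖
  rw [zero_div, abs_zero, zero_mul] at hlim'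
  exact hlim'.congr fun N => (hnorm N).symm

lemma Sbd_eq_singleton_zero (hT : IsWeightedShift T w 1) (hw : ∀ n, w n ≠ 0)
    (hlim : ∀ m, Tendsto (fun N : ℕ => |w (m + N)|) atTop atTop) : Sbd T = {0} := by
  refine Set.eq_singleton_iff_unique_mem.2 ⟨⟨0, le_rfl, fun N => by simp⟩, ?_⟩
  rintro f ⟨C, -, hC⟩
  ext m
  by_contra hfm
  have hbound (N : ℕ) : |w (m + N)| ≤ C * |w m| / ‖f m‖ := by
    have hcoord : ‖(T ^ N) f (m + N)‖ ≤ C :=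
      (lp.norm_apply_le_norm (by norm_num) _ _).trans (hC N)
    rw [hT.pow hw N, mul_one, add_sub_cancel_right, norm_mul, Complex.norm_real,
      Real.norm_eq_abs, abs_div] at hcoord
    rw [div_mul_eq_mul_div, div_le_iff₀ (abs_pos.2 (hw m))] at hcoord
    rwa [le_div_iff₀ (norm_pos_iff.2 hfm)]
  obtain ⟨N, hN⟩ := ((hlim m).eventually_gt_atTop (C * |w m| / ‖f m‖)).exists
  exact (hbound N).not_gt hN

end IsWeightedShift

section Spectrum

variable {A : Type*} [NormedRing A] [NormedAlgebra ℂ A]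

lemma spectralRadius_eq_of_tendsto_norm_pow [CompleteSpace A] {a : A} {r : ℝ}
    (h : Tendsto (fun n : ℕ => ‖a ^ n‖ ^ (1 / n : ℝ)) atTop (𝓝 r)) :
    spectralRadius ℂ a = ENNReal.ofReal r :=
  tendsto_nhds_unique (spectrum.pow_norm_pow_one_div_tendsto_nhds_spectralRadius a)
    (ENNReal.tendsto_ofReal h)

lemma spectralRadius_eq_of_norm_pow_eq_pow [CompleteSpace A] {a : A} {r : ℝ} (hr : 0 ≤ r)
    (h : ∀ n : ℕ, ‖a ^ n‖ = r ^ n) : spectralRadius ℂ a = ENNReal.ofReal r := by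
  refine spectralRadius_eq_of_tendsto_norm_pow (tendsto_const_nhds.congr' ?_)
  filter_upwards [eventually_ne_atTop 0] with n hn
  rw [h n, one_div, Real.pow_rpow_inv_natCast hr hn]

lemma spectralRadius_eq_one_of_norm_pow_eq_succ [CompleteSpace A] {a : A}
    (h : ∀ n : ℕ, ‖a ^ n‖ = n + 1) : spectralRadius ℂ a = 1 := by
  have hlim : Tendsto (fun n : ℕ => ((n : ℝ) + 1) ^ (1 / n : ℝ)) atTop (𝓝 1) := by
    have hshift : Tendsto (fun n : ℕ => (n : ℝ) + 1) atTop atTop :=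
      tendsto_atTop_add_const_right _ _ tendsto_natCast_atTop_atTop
    refine ((tendsto_rpow_div_mul_add 1 1 (-1) zero_ne_one).comp hshift).congr fun n => ?_
    simp
  rw [spectralRadius_eq_of_tendsto_norm_pow (by simpa only [h] using hlim), ENNReal.ofReal_one]

lemma norm_le_of_mem_spectrum {a : A} {R : ℝ≥0} (h : spectralRadius ℂ a ≤ R) {z : ℂ}
    (hz : z ∈ spectrum ℂ a) : ‖z‖ ≤ R := by
  have : (‖z‖₊ : ℝ≥0∞) ≤ R :=
    (le_iSup₂ (f := fun k (_ : k ∈ spectrum ℂ a) => (‖k‖₊ : ℝ≥0∞)) z hz).trans h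
  exact_mod_cast this

lemma inv_le_norm_of_mem_spectrum (u : Aˣ) {r : ℝ≥0} (h : spectralRadius ℂ (↑u⁻¹ : A) ≤ r)
    {z : ℂ} (hz : z ∈ spectrum ℂ (u : A)) : (r : ℝ)⁻¹ ≤ ‖z‖ := by
  have hz0 : z ≠ 0 := fun h0 => Units.zero_notMem_spectrum (R := ℂ) u (h0 ▸ hz)
  have hinv : z⁻¹ ∈ spectrum ℂ (↑u⁻¹ : A) := spectrum.map_inv (𝕜 := ℂ) u ▸ Set.inv_mem_inv.2 hz
  refine inv_le_of_inv_le₀ (norm_pos_iff.2 hz0) ?_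
  simpa using norm_le_of_mem_spectrum h hinv

end Spectrum

lemma norm_adjoint_pow {E : Type*} [NormedAddCommGroup E] [InnerProductSpace ℂ E]
    [CompleteSpace E] (T : E →L[ℂ] E) (N : ℕ) : ‖(adjoint T) ^ N‖ = ‖T ^ N‖ := by
  rw [← star_eq_adjoint, ← star_pow, norm_star]

section WeightedShift

variable {W : (l2 →L[ℂ] l2)ˣ} (hW : IsWeightedShift W weight 1)
include hW

lemma norm_pow_of_isWeightedShift_weight (N : ℕ) : ‖(W : l2 →L[ℂ] l2) ^ N‖ = 2 ^ N := by
  have hWN : IsWeightedShift ((W : l2 →L[ℂ] l2) ^ N) weight N := by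
    simpa using hW.pow weight_ne_zero N
  refine le_antisymm (hWN.opNorm_le fun n => ?_) ?_
  · rw [abs_of_pos (div_pos (weight_pos _) (weight_pos _)), div_le_iff₀ (weight_pos _)]
    exact weight_le_two_pow_mul N n
  · simpa [weight_zero, weight_neg_natCast] using hWN.abs_le_opNorm (-N)

lemma norm_inv_pow_of_isWeightedShift_weight (N : ℕ) :
    ‖((W⁻¹ : (l2 →L[ℂ] l2)ˣ) : l2 →L[ℂ] l2) ^ N‖ = N + 1 := by
  have hWN : IsWeightedShift (((W⁻¹ : (l2 →L[ℂ] l2)ˣ) : l2 →L[ℂ] l2) ^ N) weight (-N) := by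
    simpa using (hW.inv weight_ne_zero).pow weight_ne_zero N
  refine le_antisymm (hWN.opNorm_le fun n => ?_) ?_
  · rw [abs_of_pos (div_pos (weight_pos _) (weight_pos _)), div_le_iff₀ (weight_pos _),
      sub_neg_eq_add]
    exact weight_le_succ_mul n N
  · have hN1 : (0 : ℝ) < N + 1 := by positivity
    simpa [weight_zero, weight_natCast, abs_of_pos hN1] using hWN.abs_le_opNorm N

lemma isWeightedShift_adjoint_inv :
    IsWeightedShift (adjoint ((W⁻¹ : (l2 →L[ℂ] l2)ˣ) : l2 →L[ℂ] l2)) (fun n => (weight n)⁻¹) 1 := by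
  simpa using (hW.inv weight_ne_zero).adjoint

end WeightedShift

/-- Let `W` be the weighted bilateral shift with weights `w n = 2^n` (`n ≤ 0`),
`w n = 1/(n+1)` (`n > 0`).  Then `‖W^N‖ = 2^N`, `‖((W*)⁻¹)^N‖ = N+1` for `N ≥ 1`;
the spectral radii of `W`, `W*`, `W⁻¹`, `(W*)⁻¹` are `2`, `2`, `1`, `1`; the spectrum of `W`
lies in `{1 ≤ |z| ≤ 2}` and that of `(W*)⁻¹` in `{1/2 ≤ |z| ≤ 1}`; and `S₀(W)` is dense
while `S((W*)⁻¹) = {0}`. -/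
theorem stmt18
    (w : ℤ → ℝ)
    (hw : ∀ n : ℤ, (n ≤ 0 → w n = (2 : ℝ) ^ n) ∧ (0 < n → w n = ((n : ℝ) + 1)⁻¹))
    (W : (l2 →L[ℂ] l2)ˣ)
    (hW : ∀ (f : l2) (n : ℤ),
      (W : l2 →L[ℂ] l2) f n = ((w n / w (n - 1) : ℝ) : ℂ) * f (n - 1)) :
    (∀ N : ℕ, 1 ≤ N →
      ‖((W : l2 →L[ℂ] l2)) ^ N‖ = 2 ^ N ∧
      ‖(adjoint ((W⁻¹ : (l2 →L[ℂ] l2)ˣ) : l2 →L[ℂ] l2)) ^ N‖ = (N : ℝ) + 1) ∧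
    spectralRadius ℂ (W : l2 →L[ℂ] l2) = 2 ∧
    spectralRadius ℂ (adjoint (W : l2 →L[ℂ] l2)) = 2 ∧
    spectralRadius ℂ ((W⁻¹ : (l2 →L[ℂ] l2)ˣ) : l2 →L[ℂ] l2) = 1 ∧
    spectralRadius ℂ (adjoint ((W⁻¹ : (l2 →L[ℂ] l2)ˣ) : l2 →L[ℂ] l2)) = 1 ∧
    (∀ z ∈ spectrum ℂ (W : l2 →L[ℂ] l2), 1 ≤ ‖z‖ ∧ ‖z‖ ≤ 2) ∧
    (∀ z ∈ spectrum ℂ (adjoint ((W⁻¹ : (l2 →L[ℂ] l2)ˣ) : l2 →L[ℂ] l2)),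
      1 / 2 ≤ ‖z‖ ∧ ‖z‖ ≤ 1) ∧
    Dense (S0 (W : l2 →L[ℂ] l2)) ∧
    Sbd (adjoint ((W⁻¹ : (l2 →L[ℂ] l2)ˣ) : l2 →L[ℂ] l2)) = {0} := by
  obtain rfl := eq_weight hw
  replace hW : IsWeightedShift W weight 1 := hW
  have hWpow := norm_pow_of_isWeightedShift_weight hW
  have hWinvpow := norm_inv_pow_of_isWeightedShift_weight hW
  have rW : spectralRadius ℂ (W : l2 →L[ℂ] l2) = 2 := by
    simpa using spectralRadius_eq_of_norm_pow_eq_pow zero_le_two hWpow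
  have rWadj : spectralRadius ℂ (adjoint (W : l2 →L[ℂ] l2)) = 2 := by
    simpa using spectralRadius_eq_of_norm_pow_eq_pow zero_le_two
      fun N => (norm_adjoint_pow _ N).trans (hWpow N)
  have rWinv : spectralRadius ℂ ((W⁻¹ : (l2 →L[ℂ] l2)ˣ) : l2 →L[ℂ] l2) = 1 :=
    spectralRadius_eq_one_of_norm_pow_eq_succ hWinvpow
  have rWinvadj : spectralRadius ℂ (adjoint ((W⁻¹ : (l2 →L[ℂ] l2)ˣ) : l2 →L[ℂ] l2)) = 1 :=
    spectralRadius_eq_one_of_norm_pow_eq_succ fun N => (norm_adjoint_pow _ N).trans (hWinvpow N)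
  refine ⟨fun N _ => ⟨hWpow N, (norm_adjoint_pow _ N).trans (hWinvpow N)⟩, rW, rWadj, rWinv,
    rWinvadj, fun z hz => ⟨?_, ?_⟩, fun z hz => ⟨?_, ?_⟩, ?_, ?_⟩
  · simpa using inv_le_norm_of_mem_spectrum W (r := 1) (by simp [rWinv]) hz
  · simpa using norm_le_of_mem_spectrum (R := 2) (by simp [rW]) hz
  · have hz' : z ∈ spectrum ℂ (((star W)⁻¹ : (l2 →L[ℂ] l2)ˣ) : l2 →L[ℂ] l2) := by
      rwa [Units.coe_star_inv, star_eq_adjoint]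
    simpa using inv_le_norm_of_mem_spectrum (star W)⁻¹ (r := 2)
      (by simp [Units.coe_star, star_eq_adjoint, rWadj]) hz'
  · simpa using norm_le_of_mem_spectrum (R := 1) (by simp [rWinvadj]) hz
  · exact hW.dense_S0 weight_ne_zero tendsto_weight_add_atTop
  · exact (isWeightedShift_adjoint_inv hW).Sbd_eq_singleton_zero
      (fun n => inv_ne_zero (weight_ne_zero n)) tendsto_abs_inv_weight_add_atTop
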